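/- For every natural number n, the number of standard Young tableaux with 2n cells and at most 2 rows, both of even length, that cannot be written as a concatenation Q_1 * Q_2 of two standard Young tableaux each having exactly two rows, both of odd length, equals the n-th Catalan number (the number of Dyck paths of length 2n, i.e., of Riordan words of length 2n and shape 0 containing no letter 0). -/

import Mathlib

/-- A Riordan word: letters in {1,0,-1}, all prefix sums nonnegative, and a letter 0
occurs only when the prefix sum before it is strictly positive. -/
def IsRiordan (w : List ℤ) : Prop :=
  (∀ x ∈ w, x = 1 ∨ x = 0 ∨ x = -1) ∧
  (∀ j, 0 ≤ (w.take j).sum) ∧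
  (∀ j, j < w.length → w.getD j 0 = 0 → 0 < (w.take j).sum)

/-- Descent set of a word: 1-indexed positions j (with 1 ≤ j ≤ length - 1) such that
(w_j, w_{j+1}) = (1,0), or (0,-1), or (1,-1) with strictly positive prefix sum before w_j. -/
def wordDes (w : List ℤ) : Set ℕ :=
  {j | 1 ≤ j ∧ j + 1 ≤ w.length ∧
    ((w.getD (j - 1) 0 = 1 ∧ w.getD j 0 = 0) ∨
     (w.getD (j - 1) 0 = 0 ∧ w.getD j 0 = -1) ∨
     (w.getD (j - 1) 0 = 1 ∧ w.getD j 0 = -1 ∧ 0 < (w.take (j - 1)).sum))}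

/-- A filling with at most three rows, each row given as its list of entries. -/
structure Tab3 where
  row1 : List ℕ
  row2 : List ℕ
  row3 : List ℕ

namespace Tab3

def row (T : Tab3) : ℕ → List ℕ
  | 0 => T.row1
  | 1 => T.row2
  | 2 => T.row3
  | _ => []

/-- Number of cells. -/
def size (T : Tab3) : ℕ := T.row1.length + T.row2.length + T.row3.length

/-- `T` is a standard Young tableau with at most 3 rows: weakly decreasing row lengths,
rows strictly increasing, columns strictly increasing, and the entries are 1, …, size. -/
def IsSYT (T : Tab3) : Prop :=
  T.row2.length ≤ T.row1.length ∧ T.row3.length ≤ T.row2.length ∧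
  T.row1.Chain' (· < ·) ∧ T.row2.Chain' (· < ·) ∧ T.row3.Chain' (· < ·) ∧
  (∀ j < T.row2.length, T.row1.getD j 0 < T.row2.getD j 0) ∧
  (∀ j < T.row3.length, T.row2.getD j 0 < T.row3.getD j 0) ∧
  (T.row1 ++ T.row2 ++ T.row3).Perm (List.range' 1 T.size)

/-- Descent set of a tableau: entries j such that j+1 lies in a strictly lower row. -/
def des (T : Tab3) : Set ℕ :=
  {j | ∃ i i' : ℕ, i < i' ∧ j ∈ T.row i ∧ j + 1 ∈ T.row i'}

/-- All three row lengths have the same parity. -/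
def SameParity (T : Tab3) : Prop :=
  T.row1.length % 2 = T.row2.length % 2 ∧ T.row2.length % 2 = T.row3.length % 2

/-- All three row lengths are even. -/
def AllEven (T : Tab3) : Prop :=
  T.row1.length % 2 = 0 ∧ T.row2.length % 2 = 0 ∧ T.row3.length % 2 = 0

/-- `p = (i, j)` is a cell of `T`. -/
def IsCell (T : Tab3) (p : ℕ × ℕ) : Prop := p.2 < (T.row p.1).length

/-- The entry of `T` in cell `p = (i, j)`. -/
def entry (T : Tab3) (p : ℕ × ℕ) : ℕ := (T.row p.1).getD p.2 0

/-- Concatenation of tableaux: shift the entries of `T2` by the size of `T1` and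
append rows to rows. -/
def concat (T1 T2 : Tab3) : Tab3 :=
  ⟨T1.row1 ++ T2.row1.map (· + T1.size),
   T1.row2 ++ T2.row2.map (· + T1.size),
   T1.row3 ++ T2.row3.map (· + T1.size)⟩

/-- Delete the cell containing the entry `v`. -/
def eraseEntry (T : Tab3) (v : ℕ) : Tab3 :=
  ⟨T.row1.erase v, T.row2.erase v, T.row3.erase v⟩

/-- `T` has exactly two rows, both of odd length. -/
def TwoOddRows (T : Tab3) : Prop :=
  T.row3 = [] ∧ T.row1.length % 2 = 1 ∧ T.row2.length % 2 = 1

end Tab3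

/-- A cell of `T` whose entry is larger than `r`. -/
def BigCell (T : Tab3) (r : ℕ) (p : ℕ × ℕ) : Prop := T.IsCell p ∧ r < T.entry p

/-- The cells of `T` with entries larger than `r` form a horizontal strip (no two in the
same column, the remaining cells form the diagram of a partition) with at most one cell
in the first row, along which the entries increase from left to right. -/
def TopStrip (T : Tab3) (r : ℕ) : Prop :=
  (∀ p q, BigCell T r p → BigCell T r q → p ≠ q → p.2 ≠ q.2) ∧
  (∀ p q : ℕ × ℕ, T.IsCell q → T.entry q ≤ r → p.1 ≤ q.1 → p.2 ≤ q.2 →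
    T.IsCell p ∧ T.entry p ≤ r) ∧
  (∀ p q, BigCell T r p → BigCell T r q → p.1 = 0 → q.1 = 0 → p = q) ∧
  (∀ p q, BigCell T r p → BigCell T r q → p.2 < q.2 → T.entry p < T.entry q)

/-- The Young diagram of the partition `(a, b, c)` (with `a ≥ b ≥ c`). -/
def diag3 (a b c : ℕ) : Finset (ℕ × ℕ) :=
  ({0} : Finset ℕ) ×ˢ Finset.range a ∪ ({1} : Finset ℕ) ×ˢ Finset.range b ∪
    ({2} : Finset ℕ) ×ˢ Finset.range c

/-- A finite set of cells is the diagram of a partition iff it is downward closed. -/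
def IsYoungSet (U : Finset (ℕ × ℕ)) : Prop :=
  ∀ p ∈ U, ∀ i j : ℕ, i ≤ p.1 → j ≤ p.2 → (i, j) ∈ U

/-- The length of row `i` of a finite set of cells. -/
def rowLenOf (U : Finset (ℕ × ℕ)) (i : ℕ) : ℕ := (U.filter (fun p => p.1 = i)).card

/-- `S` is a horizontal strip of `m` cells added to the partition `(a,b,c)`, with at most
one cell in the first row, such that the union of the diagram of `(a,b,c)` and `S` is the
diagram of a partition with at most 3 parts, all of the same parity. -/
def GoodStrip (a b c m : ℕ) (S : Finset (ℕ × ℕ)) : Prop :=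
  S.card = m ∧ Disjoint S (diag3 a b c) ∧
  (∀ p ∈ S, ∀ q ∈ S, p ≠ q → p.2 ≠ q.2) ∧
  IsYoungSet (diag3 a b c ∪ S) ∧
  (∀ p ∈ diag3 a b c ∪ S, p.1 < 3) ∧
  rowLenOf (diag3 a b c ∪ S) 0 % 2 = rowLenOf (diag3 a b c ∪ S) 1 % 2 ∧
  rowLenOf (diag3 a b c ∪ S) 1 % 2 = rowLenOf (diag3 a b c ∪ S) 2 % 2 ∧
  (S.filter (fun p => p.1 = 0)).card ≤ 1

/-- Partitions of `r` with at most 3 parts, encoded as weakly decreasing triples. -/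
def parts3 (r : ℕ) : Finset (ℕ × ℕ × ℕ) :=
  ((Finset.range (r + 1)) ×ˢ (Finset.range (r + 1)) ×ˢ (Finset.range (r + 1))).filter
    (fun t => t.2.1 ≤ t.1 ∧ t.2.2 ≤ t.2.1 ∧ t.1 + t.2.1 + t.2.2 = r)

/-- The number of standard Young tableaux of shape `(a, b, c)`. -/
noncomputable def fSYT (a b c : ℕ) : ℕ :=
  Nat.card {T : Tab3 // T.IsSYT ∧ T.row1.length = a ∧ T.row2.length = b ∧ T.row3.length = c}

/-- The number of good horizontal strips of `m` cells added to `(a, b, c)`. -/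
noncomputable def hStrip (a b c m : ℕ) : ℕ :=
  Nat.card {S : Finset (ℕ × ℕ) // GoodStrip a b c m S}

/-!
Write `U` for an entry of the first row and `D` for an entry of the second row of a two-row
standard Young tableau, reading the entries `1, 2, …` in order. This identifies two-row standard
tableaux with ballot words (every prefix has at least as many `U`s as `D`s), row lengths with
letter counts, and concatenation of tableaux with concatenation of words. The tableaux to be
counted become the ballot words with even letter counts that are not a product of two ballot
words with odd letter counts.

Every nonempty such word factors uniquely as `U e c w'`, where `e` is a Dyck word, `c` is the
letter that makes both letter counts of `U e c` even, and `w'` is again such a word: if the word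
returns to level zero, `U e c` is its part up to the first return, otherwise `U e` is its part up
to the last visit of level one. Hence these words satisfy the Catalan recursion.
-/

open DyckStep

namespace TwoRowTableau

def Ballot (w : List DyckStep) : Prop := ∀ k, (w.take k).count D ≤ (w.take k).count U

lemma Ballot.count_le {w : List DyckStep} (hw : Ballot w) : w.count D ≤ w.count U := by
  simpa using hw w.length

lemma Ballot.take {w : List DyckStep} (hw : Ballot w) (k : ℕ) : Ballot (w.take k) := by
  intro j
  rw [List.take_take]
  exact hw _

lemma Ballot.of_append {u v : List DyckStep} (h : Ballot (u ++ v)) : Ballot u := by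
  simpa using h.take u.length

lemma Ballot.append {u v : List DyckStep} (hu : Ballot u) (hv : Ballot v) : Ballot (u ++ v) := by
  intro k
  have := hu k
  have := hv (k - u.length)
  simp only [List.take_append, List.count_append]
  omega

lemma ballot_singleton_U : Ballot [U] := by
  rintro (_ | _) <;> simp

lemma ballot_dyckWord (p : DyckWord) : Ballot p.toList := p.count_D_le_count_U

lemma ballot_dyckWord_append_iff (p : DyckWord) {v : List DyckStep} :
    Ballot (p.toList ++ v) ↔ Ballot v := by
  refine ⟨fun h k => ?_, (ballot_dyckWord p).append⟩
  have := h (p.toList.length + k)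
  rw [List.take_length_add_append, List.count_append, List.count_append,
    p.count_U_eq_count_D] at this
  omega

lemma count_U_dyckWord (p : DyckWord) : p.toList.count U = p.semilength := rfl

lemma count_D_dyckWord (p : DyckWord) : p.toList.count D = p.semilength :=
  p.semilength_eq_count_D.symm

lemma count_U_add_count_D (w : List DyckStep) : w.count U + w.count D = w.length := by
  induction w with
  | nil => rfl
  | cons a w ih => cases a <;> simp <;> omega

def IsOddBallot (u : List DyckStep) : Prop :=
  Ballot u ∧ u.count U % 2 = 1 ∧ u.count D % 2 = 1

def IsOddConcat (w : List DyckStep) : Prop :=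
  ∃ u v, IsOddBallot u ∧ IsOddBallot v ∧ w = u ++ v

def IsEvenIrreducible (w : List DyckStep) : Prop :=
  Ballot w ∧ w.count U % 2 = 0 ∧ w.count D % 2 = 0 ∧ ¬ IsOddConcat w

lemma isEvenIrreducible_nil : IsEvenIrreducible [] := by
  refine ⟨by simp [Ballot], rfl, rfl, ?_⟩
  rintro ⟨u, v, hu, -, h⟩
  simp [(List.append_eq_nil_iff.1 h.symm).1, IsOddBallot] at hu

lemma IsEvenIrreducible.count_even_of_append {u v : List DyckStep}
    (hw : IsEvenIrreducible (u ++ v)) (hv : Ballot v) :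
    u.count U % 2 = 0 ∨ u.count D % 2 = 0 := by
  obtain ⟨hb, hU, hD, hirr⟩ := hw
  rw [List.count_append] at hU hD
  by_contra! h
  exact hirr ⟨u, v, ⟨hb.of_append, by omega, by omega⟩, ⟨hv, by omega, by omega⟩, rfl⟩

lemma getD_le_iff_lt_countP {l : List ℕ} (hl : l.Pairwise (· < ·)) {j : ℕ} (hj : j < l.length)
    (k : ℕ) : l.getD j 0 ≤ k ↔ j < l.countP (· ≤ k) := by
  induction l generalizing j with
  | nil => simp at hj
  | cons a l ih =>
    obtain ⟨hal, hl⟩ := List.pairwise_cons.1 hl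
    have hzero (hak : k < a) : l.countP (· ≤ k) = 0 :=
      List.countP_eq_zero.2 fun x hx => by have := hal x hx; simp; omega
    rcases j with _ | j
    · by_cases hak : a ≤ k
      · simp [hak]
      · simp [hak, hzero (by omega)]
    · have hj : j < l.length := by simpa using hj
      rw [List.getD_cons_succ, List.countP_cons, ih hl hj]
      by_cases hak : a ≤ k
      · simp [hak]
      · have := hal _ (List.getElem_mem hj)
        rw [← ih hl hj, List.getD_eq_getElem _ _ hj]
        simp [hak, hzero (by omega)]
        omega

/-- The positions of the letter `s` in `w`, counted from `1`. -/
def positions (s : DyckStep) : List DyckStep → List ℕ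
  | [] => []
  | a :: w => if a = s then 1 :: (positions s w).map (· + 1) else (positions s w).map (· + 1)

section Positions

variable {s : DyckStep}

lemma mem_positions {w : List DyckStep} {x : ℕ} :
    x ∈ positions s w ↔ 0 < x ∧ w[x - 1]? = some s := by
  induction w generalizing x with
  | nil => simp [positions]
  | cons a w ih =>
    rcases x with _ | _ | x <;> by_cases h : a = s <;> simp [positions, h, ih]

lemma pairwise_positions (w : List DyckStep) : (positions s w).Pairwise (· < ·) := by
  induction w with
  | nil => exact List.Pairwise.nil
  | cons a w ih =>
    have hmap : ((positions s w).map (· + 1)).Pairwise (· < ·) :=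
      ih.map _ fun _ _ h => Nat.succ_lt_succ h
    unfold positions
    split_ifs
    · exact List.pairwise_cons.2 ⟨by simpa using fun _ hx => (mem_positions.1 hx).1, hmap⟩
    · exact hmap

lemma length_positions (w : List DyckStep) : (positions s w).length = w.count s := by
  induction w with
  | nil => rfl
  | cons a w ih => by_cases h : a = s <;> simp [positions, h, ih]

lemma positions_append (u v : List DyckStep) :
    positions s (u ++ v) = positions s u ++ (positions s v).map (· + u.length) := by
  induction u with
  | nil => simp [positions]
  | cons a u ih =>
    by_cases h : a = s <;> simp [positions, h, ih, Function.comp_def, Nat.add_assoc]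

lemma countP_positions (w : List DyckStep) (k : ℕ) :
    (positions s w).countP (· ≤ k) = (w.take k).count s := by
  have hleft : ∀ x ∈ positions s (w.take k), x ≤ k := fun x hx => by
    have := (List.getElem?_eq_some_iff.1 (mem_positions.1 hx).2).1
    simp at this
    omega
  have hright : ∀ x ∈ positions s (w.drop k), k < x + (w.take k).length := fun x hx => by
    rcases le_or_gt w.length k with hk | hk
    · simp [List.drop_of_length_le hk, positions] at hx
    · have := (mem_positions.1 hx).1
      simp [hk.le]
      omega
  conv_lhs => rw [← List.take_append_drop k w, positions_append]
  rw [List.countP_append, List.countP_eq_length.2 (by simpa using hleft),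
    List.countP_eq_zero.2 (by simpa using hright), length_positions, add_zero]

lemma getD_mem_positions {w : List DyckStep} {j : ℕ} (hj : j < w.count s) :
    (positions s w).getD j 0 ∈ positions s w := by
  rw [← length_positions] at hj
  rw [List.getD_eq_getElem _ _ hj]
  exact List.getElem_mem hj

end Positions

lemma perm_positions (w : List DyckStep) :
    (positions U w ++ positions D w).Perm (List.range' 1 w.length) := by
  have hdisj : ∀ a ∈ positions U w, ∀ b ∈ positions D w, a ≠ b := by
    rintro a ha _ hb rfl
    have := (mem_positions.1 ha).2.symm.trans (mem_positions.1 hb).2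
    simp at this
  refine (List.perm_ext_iff_of_nodup (List.nodup_append.2 ⟨(pairwise_positions w).nodup,
    (pairwise_positions w).nodup, hdisj⟩) List.nodup_range').2 fun x => ?_
  simp only [List.mem_append, mem_positions, List.mem_range'_1]
  rcases x with _ | x
  · simp
  · cases h : w[x]? with
    | none =>
      have := List.getElem?_eq_none_iff.1 h
      simp [h]
      omega
    | some a =>
      obtain ⟨hx, -⟩ := List.getElem?_eq_some_iff.1 h
      cases a <;> simp [h] <;> omega

lemma ballot_iff_column (w : List DyckStep) :
    Ballot w ↔ w.count D ≤ w.count U ∧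
      ∀ j < w.count D, (positions U w).getD j 0 < (positions D w).getD j 0 := by
  have hsorted := fun s => pairwise_positions (s := s) w
  constructor
  · intro hw
    refine ⟨hw.count_le, fun j hj => ?_⟩
    set k := (positions D w).getD j 0
    have hjD : j < (positions D w).length := by rwa [length_positions]
    have hjU : j < (positions U w).length := by rw [length_positions]; exact hj.trans_le hw.count_le
    have hkD := (getD_le_iff_lt_countP (hsorted D) hjD k).1 le_rfl
    rw [countP_positions] at hkD
    have hle : (positions U w).getD j 0 ≤ k := by
      rw [getD_le_iff_lt_countP (hsorted U) hjU, countP_positions]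
      exact hkD.trans_le (hw k)
    -- equality would make the letter at position `k` both `U` and `D`
    refine hle.lt_of_ne fun heq => ?_
    have hU := (mem_positions.1 (heq ▸ getD_mem_positions (hjU.trans_eq (length_positions w)))).2
    have hD : w[k - 1]? = some D := (mem_positions.1 (getD_mem_positions hj)).2
    simp [hU] at hD
  · rintro ⟨hDU, hcol⟩ k
    set m := (w.take k).count D
    rcases Nat.eq_zero_or_pos m with hm | hm
    · omega
    have hmw : m ≤ w.count D := (List.take_sublist k w).count_le D
    have hD : (positions D w).getD (m - 1) 0 ≤ k := by
      rw [getD_le_iff_lt_countP (hsorted D) (by rw [length_positions]; omega), countP_positions]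
      omega
    have hU := (getD_le_iff_lt_countP (hsorted U) (by rw [length_positions]; omega) k).1
      ((hcol (m - 1) (by omega)).le.trans hD)
    rw [countP_positions] at hU
    omega

def tabOf (w : List DyckStep) : Tab3 := ⟨positions U w, positions D w, []⟩

def wordOf (T : Tab3) : List DyckStep :=
  (List.range T.size).map fun i => if i + 1 ∈ T.row1 then U else D

lemma size_tabOf (w : List DyckStep) : (tabOf w).size = w.length := by
  simp [tabOf, Tab3.size, length_positions, count_U_add_count_D]

lemma tabOf_append (u v : List DyckStep) : tabOf (u ++ v) = (tabOf u).concat (tabOf v) := by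
  unfold Tab3.concat
  rw [size_tabOf]
  simp [tabOf, positions_append]

lemma isSYT_tabOf_iff {w : List DyckStep} : (tabOf w).IsSYT ↔ Ballot w := by
  have hchain := fun s => List.isChain_iff_pairwise.2 (pairwise_positions (s := s) w)
  have hperm : ((tabOf w).row1 ++ (tabOf w).row2 ++ (tabOf w).row3).Perm
      (List.range' 1 (tabOf w).size) := by
    show (positions U w ++ positions D w ++ []).Perm _
    rw [List.append_nil, size_tabOf]
    exact perm_positions w
  have hlen (s : DyckStep) : (positions s w).length = w.count s := length_positions w
  rw [ballot_iff_column]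
  constructor
  · rintro ⟨hDU, -, -, -, -, hcol, -, -⟩
    exact ⟨by simpa [tabOf, hlen] using hDU, fun j hj => hcol j (by simpa [tabOf, hlen] using hj)⟩
  · rintro ⟨hDU, hcol⟩
    exact ⟨by simpa [tabOf, hlen] using hDU, by simp [tabOf], hchain U, hchain D,
      List.isChain_nil, fun j hj => hcol j (by simpa [tabOf, hlen] using hj), by simp [tabOf],
      hperm⟩

lemma wordOf_tabOf (w : List DyckStep) : wordOf (tabOf w) = w := by
  refine List.ext_getElem (by simp [wordOf, size_tabOf]) fun i _ hi => ?_
  cases h : w[i] <;> simp [wordOf, tabOf, mem_positions, List.getElem?_eq_getElem hi, h]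

lemma tabOf_injective : Function.Injective tabOf :=
  Function.LeftInverse.injective wordOf_tabOf

lemma tabOf_wordOf {T : Tab3} (hT : T.IsSYT) (h3 : T.row3 = []) : tabOf (wordOf T) = T := by
  obtain ⟨-, -, hc1, hc2, -, -, -, hperm⟩ := hT
  rw [h3, List.append_nil] at hperm
  have hrows : ∀ x, x ∈ T.row1 ∨ x ∈ T.row2 ↔ 0 < x ∧ x ≤ T.size := fun x => by
    rw [← List.mem_append, hperm.mem_iff, List.mem_range'_1]
    omega
  have hdisj : ∀ x ∈ T.row1, x ∉ T.row2 := fun x hx1 hx2 =>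
    (List.nodup_append.1 (hperm.nodup_iff.2 List.nodup_range')).2.2 x hx1 x hx2 rfl
  have hmem (s : DyckStep) (x : ℕ) :
      x ∈ positions s (wordOf T) ↔ x ∈ (if s = U then T.row1 else T.row2) := by
    rw [mem_positions]
    rcases x with _ | x
    · have h0 := hrows 0
      simp only [lt_irrefl, false_and, iff_false, not_or] at h0
      cases s <;> simp [h0.1, h0.2]
    · have := hrows (x + 1)
      have := hdisj (x + 1)
      cases s <;> simp [wordOf] <;> grind
  have hrow (s : DyckStep) : positions s (wordOf T) = if s = U then T.row1 else T.row2 := by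
    refine (pairwise_positions _).eq_of_mem_iff ?_ (hmem s)
    cases s
    · exact List.isChain_iff_pairwise.1 hc1
    · exact List.isChain_iff_pairwise.1 hc2
  rw [tabOf, hrow U, hrow D, ← h3]
  rfl

lemma exists_tabOf_eq {T : Tab3} (hT : T.IsSYT) (h3 : T.row3 = []) : ∃ w, tabOf w = T :=
  ⟨wordOf T, tabOf_wordOf hT h3⟩

lemma isOddBallot_iff {u : List DyckStep} :
    IsOddBallot u ↔ (tabOf u).IsSYT ∧ (tabOf u).TwoOddRows := by
  rw [IsOddBallot, isSYT_tabOf_iff]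
  simp [Tab3.TwoOddRows, tabOf, length_positions]

lemma exists_concat_iff_isOddConcat (w : List DyckStep) :
    (∃ T1 T2 : Tab3, T1.IsSYT ∧ T2.IsSYT ∧ T1.TwoOddRows ∧ T2.TwoOddRows ∧
      tabOf w = T1.concat T2) ↔ IsOddConcat w := by
  constructor
  · rintro ⟨T1, T2, hS1, hS2, hO1, hO2, h⟩
    obtain ⟨u, rfl⟩ := exists_tabOf_eq hS1 hO1.1
    obtain ⟨v, rfl⟩ := exists_tabOf_eq hS2 hO2.1
    exact ⟨u, v, isOddBallot_iff.2 ⟨hS1, hO1⟩, isOddBallot_iff.2 ⟨hS2, hO2⟩,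
      tabOf_injective (h.trans (tabOf_append u v).symm)⟩
  · rintro ⟨u, v, hu, hv, rfl⟩
    obtain ⟨hS1, hO1⟩ := isOddBallot_iff.1 hu
    obtain ⟨hS2, hO2⟩ := isOddBallot_iff.1 hv
    exact ⟨_, _, hS1, hS2, hO1, hO2, tabOf_append u v⟩

def IsEvenIrreducibleTableau (n : ℕ) (T : Tab3) : Prop :=
  T.IsSYT ∧ T.size = 2 * n ∧ T.row3 = [] ∧ T.row1.length % 2 = 0 ∧ T.row2.length % 2 = 0 ∧
    ¬ ∃ T1 T2 : Tab3, T1.IsSYT ∧ T2.IsSYT ∧ T1.TwoOddRows ∧ T2.TwoOddRows ∧ T = T1.concat T2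

lemma isEvenIrreducibleTableau_tabOf_iff (n : ℕ) (w : List DyckStep) :
    IsEvenIrreducibleTableau n (tabOf w) ↔ w.length = 2 * n ∧ IsEvenIrreducible w := by
  rw [IsEvenIrreducibleTableau, isSYT_tabOf_iff, size_tabOf, exists_concat_iff_isOddConcat]
  simp only [tabOf, length_positions, IsEvenIrreducible, true_and]
  tauto

/-- Chosen so that both letter counts of `block e` are even. -/
def blockEnd (e : DyckWord) : DyckStep := if e.semilength % 2 = 0 then U else D

def block (e : DyckWord) : List DyckStep := U :: e.toList ++ [blockEnd e]

lemma length_block (e : DyckWord) : (block e).length = e.toList.length + 2 := by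
  simp [block]

lemma count_block_U (e : DyckWord) : (block e).count U % 2 = 0 := by
  unfold block blockEnd
  split_ifs <;> simp [count_U_dyckWord] <;> omega

lemma count_block_D (e : DyckWord) : (block e).count D % 2 = 0 := by
  unfold block blockEnd
  split_ifs <;> simp [count_D_dyckWord] <;> omega

lemma ballot_block (e : DyckWord) : Ballot (block e) := by
  unfold block blockEnd
  split_ifs
  · exact (ballot_singleton_U.append (ballot_dyckWord e)).append ballot_singleton_U
  · exact ballot_dyckWord e.nest

lemma take_succ_block_append (e : DyckWord) (w : List DyckStep) {k : ℕ}
    (hk : k ≤ e.toList.length) : (block e ++ w).take (k + 1) = U :: e.toList.take k := by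
  simp [block, List.take_append_of_le_length hk]

lemma not_isOddBallot_of_block_eq_append {e : DyckWord} {u c : List DyckStep}
    (h : block e = u ++ c) (hc : Ballot c) : ¬ IsOddBallot u := by
  rintro ⟨-, hU, hD⟩
  rcases c.eq_nil_or_concat' with rfl | ⟨c, x, rfl⟩
  · have := count_block_U e
    rw [h, List.append_nil] at this
    omega
  have h' : U :: e.toList = u ++ c := List.append_inj_left'
    ((List.cons_append ..).symm.trans (h.trans (List.append_assoc ..).symm)) rfl
  rcases u with _ | ⟨y, u⟩
  · simp at hU
  simp only [List.cons_append, List.cons.injEq] at h'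
  obtain ⟨rfl, he⟩ := h'
  -- `e = u ++ c` with both parts ballot forces `u` to be balanced
  have hbal := e.count_U_eq_count_D
  have hu := (he ▸ ballot_dyckWord e : Ballot (u ++ c)).of_append.count_le
  have hc' := hc.of_append.count_le
  rw [he, List.count_append, List.count_append] at hbal
  simp at hU hD
  omega

lemma isOddConcat_block_append_iff {e : DyckWord} {w : List DyckStep} (hw : Ballot w) :
    IsOddConcat (block e ++ w) ↔ IsOddConcat w := by
  have hU := count_block_U e
  have hD := count_block_D e
  constructor
  · rintro ⟨u, v, hu, hv, h⟩
    rcases List.append_eq_append_iff.1 h with ⟨a, rfl, rfl⟩ | ⟨c, hc, rfl⟩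
    · refine ⟨a, v, ⟨hw.of_append, ?_, ?_⟩, hv, rfl⟩ <;>
      · have := hu.2
        simp only [List.count_append] at this
        omega
    · exact absurd hu (not_isOddBallot_of_block_eq_append hc hv.1.of_append)
  · rintro ⟨u, v, hu, hv, rfl⟩
    refine ⟨block e ++ u, v, ⟨(ballot_block e).append hu.1, ?_, ?_⟩, hv, by simp⟩ <;>
    · have := hu.2
      simp only [List.count_append]
      omega

lemma isEvenIrreducible_block_append_iff {e : DyckWord} {w : List DyckStep} (hw : Ballot w) :
    IsEvenIrreducible (block e ++ w) ↔ IsEvenIrreducible w := by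
  simp only [IsEvenIrreducible, isOddConcat_block_append_iff hw, List.count_append,
    Nat.add_mod, count_block_U, count_block_D, zero_add, Nat.mod_mod, (ballot_block e).append hw,
    hw, true_and]

lemma Ballot.exists_eq_nest_append {w : List DyckStep} (hw : Ballot w) {r : ℕ}
    (hr : w.take r ≠ []) (hbal : (w.take r).count U = (w.take r).count D) :
    ∃ (e : DyckWord) (w' : List DyckStep), Ballot w' ∧ w = e.nest.toList ++ w' := by
  let p : DyckWord := ⟨w.take r, hbal, hw.take r⟩
  have hp : p ≠ 0 := DyckWord.toList_ne_nil.1 hr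
  have hsplit : w = p.insidePart.nest.toList ++ (p.outsidePart.toList ++ w.drop r) := by
    rw [← List.append_assoc]
    exact (congrArg (· ++ w.drop r) (congrArg DyckWord.toList
      (DyckWord.nest_insidePart_add_outsidePart hp))).trans (List.take_append_drop r w) |>.symm
  exact ⟨_, _, (ballot_dyckWord_append_iff _).1 (hsplit ▸ hw), hsplit⟩

lemma Ballot.exists_eq_append_U_cons {t : List DyckStep} (ht : Ballot t)
    (hne : t.count U ≠ t.count D) :
    ∃ (e : DyckWord) (w' : List DyckStep), Ballot w' ∧ t = e.toList ++ U :: w' := by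
  -- cut `t` at the last time it is balanced
  let Q k := (t.take k).count U = (t.take k).count D
  set r := Nat.findGreatest Q t.length
  have hQr : Q r := Nat.findGreatest_spec (m := 0) (Nat.zero_le _) (by simp [Q])
  have hQ : ∀ k, r < k → ¬ Q k := fun k hk hQk => by
    rcases le_or_gt k t.length with hkt | hkt
    · exact Nat.findGreatest_is_greatest hk hkt hQk
    · exact hne (by simpa [Q, List.take_of_length_le hkt.le] using hQk)
  have hrt : r < t.length := (Nat.findGreatest_le _).lt_of_ne fun h => by
    have : Q t.length := h ▸ hQr
    exact hne (by simpa [Q] using this)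
  obtain ⟨x, w', hdrop⟩ := List.exists_cons_of_ne_nil (by simpa using hrt : t.drop r ≠ [])
  have habove (j : ℕ) : (x :: w'.take j).count D + 1 ≤ (x :: w'.take j).count U := by
    have h1 := ht (r + (j + 1))
    have h2 := hQ (r + (j + 1)) (by omega)
    simp only [Q] at hQr h2
    rw [List.take_add, hdrop, List.take_succ_cons, List.count_append, List.count_append] at h1 h2
    omega
  obtain rfl : x = U := by
    have := habove 0
    cases x
    · rfl
    · simp at this
  refine ⟨⟨t.take r, hQr, ht.take r⟩, w', fun j => ?_, hdrop ▸ (List.take_append_drop r t).symm⟩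
  have := habove j
  simp at this
  omega

lemma exists_eq_block_append_of_balanced {w : List DyckStep} (hw : IsEvenIrreducible w) {r : ℕ}
    (hr : w.take r ≠ []) (hbal : (w.take r).count U = (w.take r).count D) :
    ∃ e w', Ballot w' ∧ w = block e ++ w' := by
  obtain ⟨e, w', hw', rfl⟩ := hw.1.exists_eq_nest_append hr hbal
  have hodd : e.semilength % 2 = 1 := by
    have := hw.count_even_of_append hw'
    simp [DyckWord.nest, count_U_dyckWord, count_D_dyckWord] at this
    omega
  exact ⟨e, w', hw', by simp [block, blockEnd, hodd, DyckWord.nest]⟩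

lemma exists_eq_block_append_of_unbalanced {w : List DyckStep} (hw : IsEvenIrreducible w)
    (hne : w ≠ []) (hpos : ∀ k, 0 < k → (w.take k).count D < (w.take k).count U) :
    ∃ e w', Ballot w' ∧ w = block e ++ w' := by
  obtain ⟨a, t, rfl⟩ := List.exists_cons_of_ne_nil hne
  obtain rfl : a = U := by
    have := hpos 1 one_pos
    cases a <;> simp_all
  have ht : Ballot t := fun k => by
    have := hpos (k + 1) k.succ_pos
    simp at this
    omega
  have hunbal : t.count U ≠ t.count D := by
    have hU := hw.2.1
    have hD := hw.2.2.1
    simp at hU hD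
    omega
  obtain ⟨e, w', hw', rfl⟩ := ht.exists_eq_append_U_cons hunbal
  have heven : e.semilength % 2 = 0 := by
    have := (show IsEvenIrreducible ((U :: e.toList ++ [U]) ++ w') by simpa using hw)
      |>.count_even_of_append hw'
    simp [count_U_dyckWord, count_D_dyckWord] at this
    omega
  exact ⟨e, w', hw', by simp [block, blockEnd, heven]⟩

lemma exists_eq_block_append {w : List DyckStep} (hw : IsEvenIrreducible w) (hne : w ≠ []) :
    ∃ e w', Ballot w' ∧ w = block e ++ w' := by
  by_cases h : ∃ r, 0 < r ∧ (w.take r).count U = (w.take r).count D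
  · obtain ⟨r, hr, hbal⟩ := h
    exact exists_eq_block_append_of_balanced hw (by simpa [hr.ne'] using hne) hbal
  · push Not at h
    exact exists_eq_block_append_of_unbalanced hw hne fun k hk =>
      (hw.1 k).lt_of_ne (h k hk).symm

lemma block_append_inj {e e' : DyckWord} {w w' : List DyckStep} (hw : Ballot w)
    (hw' : Ballot w') (h : block e ++ w = block e' ++ w') : e = e' ∧ w = w' := by
  wlog hle : e.toList.length ≤ e'.toList.length generalizing e e' w w'
  · exact (this hw' hw h.symm (le_of_not_ge hle)).imp Eq.symm Eq.symm
  rcases hle.eq_or_lt with hlen | hlt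
  · obtain ⟨hblock, rfl⟩ := List.append_inj h (by simp [block, hlen])
    simp only [block, List.cons_append, List.cons.injEq, true_and] at hblock
    exact ⟨DyckWord.ext (List.append_inj hblock hlen).1, rfl⟩
  exfalso
  have hlen := length_block e
  cases hc : blockEnd e
  · -- from the end of `block e` on, `block e ++ w` stays at level two or more,
    -- while `U e'` ends at level one
    have h1 := take_succ_block_append e' w' le_rfl
    rw [← h, show e'.toList.length + 1 = (block e).length + (e'.toList.length - e.toList.length - 1)
      by omega, List.take_length_add_append] at h1
    have h2 := congrArg (List.count U) h1
    have h3 := congrArg (List.count D) h1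
    have := hw (e'.toList.length - e.toList.length - 1)
    simp [block, hc, count_U_dyckWord, count_D_dyckWord] at h2 h3
    omega
  · -- `block e` returns to level zero, which a proper prefix of `U e'` never does
    have h1 := take_succ_block_append e' w' (show e.toList.length + 1 ≤ e'.toList.length by omega)
    rw [← h, show e.toList.length + 1 + 1 = (block e).length + 0 by omega,
      List.take_length_add_append] at h1
    have h2 := congrArg (List.count U) h1
    have h3 := congrArg (List.count D) h1
    have := e'.count_D_le_count_U (e.toList.length + 1)
    simp [block, hc, count_U_dyckWord, count_D_dyckWord] at h2 h3
    omega

instance : Fintype DyckStep := ⟨{U, D}, fun s => by cases s <;> simp⟩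

def evenIrreducibleWords (n : ℕ) : Set (List DyckStep) :=
  {w | w.length = 2 * n ∧ IsEvenIrreducible w}

instance (n : ℕ) : Finite (evenIrreducibleWords n) :=
  ((List.finite_length_eq DyckStep (2 * n)).subset fun _ hw => hw.1).to_subtype

def blockAppend (n : ℕ) :
    (Σ i : Fin (n + 1), {p : DyckWord // p.semilength = i} × evenIrreducibleWords (n - i)) →
      evenIrreducibleWords (n + 1) :=
  fun ⟨i, e, w⟩ => ⟨block e ++ w, by
    have := e.1.two_mul_semilength_eq_length
    have := i.isLt
    simp only [List.length_append, length_block, w.2.1]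
    omega, (isEvenIrreducible_block_append_iff w.2.2.1).2 w.2.2⟩

lemma blockAppend_bijective (n : ℕ) : Function.Bijective (blockAppend n) := by
  constructor
  · rintro ⟨i, ⟨e, he⟩, ⟨w, hw⟩⟩ ⟨i', ⟨e', he'⟩, ⟨w', hw'⟩⟩ h
    obtain ⟨rfl, rfl⟩ := block_append_inj hw.2.1 hw'.2.1 (congrArg Subtype.val h)
    obtain rfl : i = i' := Fin.ext (he.symm.trans he')
    rfl
  · rintro ⟨w, hlen, hw⟩
    obtain ⟨e, w', hw', rfl⟩ := exists_eq_block_append hw (by rintro rfl; simp at hlen)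
    have := e.two_mul_semilength_eq_length
    simp only [List.length_append, length_block] at hlen
    exact ⟨⟨⟨e.semilength, by omega⟩, ⟨e, rfl⟩, ⟨w', by simp; omega,
      (isEvenIrreducible_block_append_iff hw').1 hw⟩⟩, rfl⟩

lemma card_evenIrreducibleWords (n : ℕ) : Nat.card (evenIrreducibleWords n) = catalan n := by
  induction n using Nat.strong_induction_on with
  | _ n ih =>
    rcases n with _ | n
    · have : evenIrreducibleWords 0 = {[]} := by
        ext w
        simp only [evenIrreducibleWords, Set.mem_ofPred_eq, Set.mem_singleton_iff, mul_zero,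
          List.length_eq_zero_iff]
        exact ⟨And.left, fun h => ⟨h, h ▸ isEvenIrreducible_nil⟩⟩
      simp [this]
    · rw [← Nat.card_congr (Equiv.ofBijective _ (blockAppend_bijective n)), Nat.card_sigma,
        catalan_succ]
      refine Finset.sum_congr rfl fun i _ => ?_
      rw [Nat.card_prod, Nat.card_eq_fintype_card, DyckWord.card_dyckWord_semilength_eq_catalan,
        ih _ (by omega)]

noncomputable def tabOfEquiv (n : ℕ) :
    evenIrreducibleWords n ≃ {T // IsEvenIrreducibleTableau n T} :=
  Equiv.ofBijective (fun w => ⟨tabOf w, (isEvenIrreducibleTableau_tabOf_iff n w).2 w.2⟩) <| by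
    refine ⟨fun w w' h => Subtype.ext (tabOf_injective (congrArg Subtype.val h)), ?_⟩
    rintro ⟨T, hT⟩
    obtain ⟨w, rfl⟩ := exists_tabOf_eq hT.1 hT.2.2.1
    exact ⟨⟨w, (isEvenIrreducibleTableau_tabOf_iff n w).1 hT⟩, rfl⟩

end TwoRowTableau

/-- the number of standard Young tableaux with 2n cells and at most 2 rows,
both of even length, which are not a concatenation of two standard Young tableaux each with
exactly two rows both of odd length, is the n-th Catalan number. -/
theorem statement8 (n : ℕ) :
    Nat.card {T : Tab3 // T.IsSYT ∧ T.size = 2 * n ∧ T.row3 = [] ∧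
        T.row1.length % 2 = 0 ∧ T.row2.length % 2 = 0 ∧
        ¬ ∃ T1 T2 : Tab3, T1.IsSYT ∧ T2.IsSYT ∧ T1.TwoOddRows ∧ T2.TwoOddRows ∧
          T = T1.concat T2} = catalan n :=
  (Nat.card_congr (TwoRowTableau.tabOfEquiv n)).symm.trans
    (TwoRowTableau.card_evenIrreducibleWords n)
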